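/- Let A and B be coisotropic subspaces of (V,ω) and set W = A^ω + B^ω. Then W^ω = A ∩ B and W ∩ W^ω = (A^ω + B^ω) ∩ (A ∩ B) = (A^ω ∩ B) + (B^ω ∩ A). -/

import Mathlib

open Module

variable {V : Type*} [AddCommGroup V] [Module ℝ V]

/-- The symplectic orthogonal of a subspace `W`:
`{v ∈ V | ω v w = 0 for all w ∈ W}`. -/
def sorth (ω : LinearMap.BilinForm ℝ V) (W : Submodule ℝ V) : Submodule ℝ V where
  carrier := {v | ∀ w ∈ W, ω v w = 0}
  add_mem' := by
    intro a b ha hb w hw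
    simp only [Set.mem_setOf_eq] at *
    simp [ha w hw, hb w hw]
  zero_mem' := by intro w hw; simp
  smul_mem' := by
    intro c a ha w hw
    simp only [Set.mem_setOf_eq] at *
    simp [ha w hw]

/-- Two subspaces are `ω`-orthogonal. -/
def OrthSub (ω : LinearMap.BilinForm ℝ V) (E F : Submodule ℝ V) : Prop :=
  ∀ e ∈ E, ∀ f ∈ F, ω e f = 0

open LinearMap (BilinForm)

theorem sup_inf_inf_eq_of_le {α : Type*} [Lattice α] [IsModularLattice α] {a b a' b' : α}
    (ha : a' ≤ a) (hb : b' ≤ b) : (a' ⊔ b') ⊓ (a ⊓ b) = a' ⊓ b ⊔ b' ⊓ a :=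
  calc (a' ⊔ b') ⊓ (a ⊓ b) = (a' ⊔ b' ⊓ a) ⊓ b := by rw [← inf_assoc, sup_inf_assoc_of_le _ ha]
    _ = b' ⊓ a ⊔ a' ⊓ b := by rw [sup_comm, sup_inf_assoc_of_le _ (inf_le_left.trans hb)]
    _ = a' ⊓ b ⊔ b' ⊓ a := sup_comm _ _

theorem sorth_eq_orthogonal {ω : BilinForm ℝ V} (hω : ω.IsRefl) (W : Submodule ℝ V) :
    sorth ω W = ω.orthogonal W := by
  ext v
  exact forall₂_congr fun w _ ↦ ⟨hω v w, hω w v⟩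

theorem sorth_sup (ω : BilinForm ℝ V) (E F : Submodule ℝ V) :
    sorth ω (E ⊔ F) = sorth ω E ⊓ sorth ω F := by
  refine le_antisymm (le_inf (fun v hv w hw ↦ hv w (Submodule.mem_sup_left hw))
    (fun v hv w hw ↦ hv w (Submodule.mem_sup_right hw))) ?_
  rintro v ⟨hvE, hvF⟩ w hw
  obtain ⟨e, he, f, hf, rfl⟩ := Submodule.mem_sup.mp hw
  rw [map_add, hvE e he, hvF f hf, add_zero]

theorem sorth_sorth [FiniteDimensional ℝ V] {ω : BilinForm ℝ V} (hω : ω.Nondegenerate)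
    (hωrefl : ω.IsRefl) (W : Submodule ℝ V) : sorth ω (sorth ω W) = W := by
  rw [sorth_eq_orthogonal hωrefl, sorth_eq_orthogonal hωrefl,
    BilinForm.orthogonal_orthogonal hω hωrefl]

theorem sorth_sum_eq_inf_and_inter [FiniteDimensional ℝ V]
    (ω : LinearMap.BilinForm ℝ V) (hω : ω.Nondegenerate) (hωalt : ω.IsAlt)
    (A B : Submodule ℝ V) (hA : sorth ω A ≤ A) (hB : sorth ω B ≤ B) :
    sorth ω (sorth ω A ⊔ sorth ω B) = A ⊓ B ∧
      (sorth ω A ⊔ sorth ω B) ⊓ sorth ω (sorth ω A ⊔ sorth ω B)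
        = (sorth ω A ⊔ sorth ω B) ⊓ (A ⊓ B) ∧
      (sorth ω A ⊔ sorth ω B) ⊓ (A ⊓ B) = (sorth ω A ⊓ B) ⊔ (sorth ω B ⊓ A) := by
  have hsorth : sorth ω (sorth ω A ⊔ sorth ω B) = A ⊓ B := by
    rw [sorth_sup, sorth_sorth hω hωalt.isRefl, sorth_sorth hω hωalt.isRefl]
  exact ⟨hsorth, by rw [hsorth], sup_inf_inf_eq_of_le hA hB⟩
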